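/- arXiv:2201.10156 — 4 statements merged into one kernel-verified Lean document; each statement's English description precedes it below -/
import Mathlib

section
/- Let α be irrational and consider the linear flow φ_t(x, y) = (x + t·α, y + t) mod 1 on the torus ℝ²/ℤ² (with the flat metric induced from the Euclidean metric). If α is badly approximable, i.e., there is δ > 0 with |α − p/q| > δ/q² for all rationals p/q, then the flow φ is superdense: there exists c > 0 such that for every starting point (x, y) and every T > 0, the orbit segment of time length cT is 1/T-dense in the torus. -/
noncomputable def torusDist (p q : ℝ × ℝ) : ℝ :=
  ⨅ m : ℤ × ℤ, Real.sqrt ((p.1 - q.1 - m.1) ^ 2 + (p.2 - q.2 - m.2) ^ 2)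

lemma torusDist_le (p q : ℝ × ℝ) (m : ℤ × ℤ) :
    torusDist p q ≤ Real.sqrt ((p.1 - q.1 - m.1) ^ 2 + (p.2 - q.2 - m.2) ^ 2) := by
  apply ciInf_le
  refine ⟨0, ?_⟩
  rintro x ⟨m', rfl⟩
  exact Real.sqrt_nonneg _

lemma key_lemma (α δ : ℝ) (hδ : 0 < δ)
    (hbad : ∀ p q : ℤ, 1 ≤ q → |α - (p : ℝ) / q| > δ / (q : ℝ) ^ 2) :
    ∀ i : ℕ, ∀ β : ℝ, ∃ n : ℕ, ∃ P : ℤ,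
      (n : ℝ) ≤ (8 / δ) * 2 ^ i ∧ |(n : ℝ) * α - P - β| ≤ 1 / 2 ^ i := by
  intro i
  induction i with
  | zero =>
    intro β
    refine ⟨0, -⌊β⌋, by norm_num; positivity, ?_⟩
    have h1 := Int.fract_nonneg β
    have h2 := (Int.fract_lt_one β).le
    rw [Int.fract] at h1 h2
    push_cast
    rw [abs_le]
    constructor <;> · simp only [pow_zero]; linarith
  | succ i ih =>
    intro β
    obtain ⟨p, q, hq0, hqle, hθ⟩ :=
      Real.exists_int_int_abs_mul_sub_le α (n := 2 ^ (i + 1)) (by positivity)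
    set θ : ℝ := (q : ℝ) * α - p with hθdef
    have hq1 : (1 : ℝ) ≤ (q : ℝ) := by exact_mod_cast hq0
    have hqR : (q : ℝ) ≤ 2 ^ (i + 1) := by exact_mod_cast hqle
    have hqne : (q : ℝ) ≠ 0 := by linarith
    have hθlow : |θ| > δ / q := by
      have h := hbad p q hq0
      have h2 : θ = (q : ℝ) * (α - (p : ℝ) / q) := by rw [hθdef]; field_simp; try ring
      have h3 : |θ| = (q : ℝ) * |α - (p : ℝ) / q| := by
        rw [h2, abs_mul, abs_of_pos (show (0:ℝ) < q by linarith)]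
      rw [h3]
      have h4 : (q : ℝ) * (δ / q ^ 2) = δ / q := by field_simp
      calc δ / q = (q : ℝ) * (δ / q ^ 2) := h4.symm
        _ < (q : ℝ) * |α - (p : ℝ) / q| := by
            exact mul_lt_mul_of_pos_left h (by linarith)
    have hθpos : 0 < |θ| := lt_trans (by positivity) hθlow
    have hθup : |θ| ≤ 1 / 2 ^ (i + 1) := by
      refine le_trans hθ ?_
      apply one_div_le_one_div_of_le (by positivity)
      push_cast
      linarith
    set σ : ℝ := if 0 ≤ θ then 1 else -1 with hσdef
    have hσθ : σ * θ = |θ| := by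
      by_cases h : 0 ≤ θ
      · simp [hσdef, h, abs_of_nonneg h]
      · simp [hσdef, h, abs_of_neg (lt_of_not_ge h)]
    have hσsq : σ * σ = 1 := by
      by_cases h : 0 ≤ θ <;> simp [hσdef, h]
    have hσabs : |σ| = 1 := by
      by_cases h : 0 ≤ θ <;> simp [hσdef, h]
    have hθeq : (q : ℝ) * α - (p : ℝ) = σ * |θ| := by
      rw [← hσθ, hθdef]
      linear_combination (-(q:ℝ) * α + p) * hσsq
    obtain ⟨n₀, P₀, hn₀, herr⟩ := ih (β - σ * (1 / 2 ^ i))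
    set e : ℝ := (n₀ : ℝ) * α - P₀ - (β - σ * (1 / 2 ^ i)) with hedef
    set d : ℝ := σ * (β - ((n₀ : ℝ) * α - P₀)) with hddef
    have hde : d = 1 / 2 ^ i - σ * e := by
      linear_combination hddef + σ * hedef + (1 / (2:ℝ) ^ i) * hσsq
    have hσd : σ * d = β - ((n₀ : ℝ) * α - P₀) := by
      rw [hddef]
      linear_combination (β - ((n₀:ℝ) * α - P₀)) * hσsq
    have hσe : |σ * e| ≤ 1 / 2 ^ i := by
      rw [abs_mul, hσabs, one_mul]; exact herr
    have habs := abs_le.mp hσe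
    have hd0 : 0 ≤ d := by rw [hde]; linarith [habs.2]
    have hd2 : d ≤ 2 / 2 ^ i := by
      rw [hde]
      have h1 : (1:ℝ) / 2 ^ i + 1 / 2 ^ i = 2 / 2 ^ i := by ring
      linarith [habs.1]
    set j : ℕ := (⌊d / |θ|⌋).toNat with hjdef
    have hjfl : (⌊d / |θ|⌋ : ℝ) = (j : ℝ) := by
      rw [hjdef]
      have : 0 ≤ ⌊d / |θ|⌋ := Int.floor_nonneg.mpr (by positivity)
      exact_mod_cast (Int.toNat_of_nonneg this).symm
    have hjle : (j : ℝ) ≤ d / |θ| := by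
      have := Int.floor_le (d / |θ|); rwa [hjfl] at this
    have hj1 : (j : ℝ) * |θ| ≤ d := by
      calc (j : ℝ) * |θ| ≤ d / |θ| * |θ| :=
            mul_le_mul_of_nonneg_right hjle (abs_nonneg θ)
        _ = d := div_mul_cancel₀ d (ne_of_gt hθpos)
    have hj2 : d - (j : ℝ) * |θ| < |θ| := by
      have h := Int.lt_floor_add_one (d / |θ|)
      rw [hjfl] at h
      have h2 : d < ((j : ℝ) + 1) * |θ| := by
        calc d = d / |θ| * |θ| := (div_mul_cancel₀ d (ne_of_gt hθpos)).symm
          _ < ((j : ℝ) + 1) * |θ| := mul_lt_mul_of_pos_right h hθpos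
      nlinarith
    have hjbound : (j : ℝ) * (q : ℝ) ≤ (8 / δ) * 2 ^ i := by
      have hq2 : (q : ℝ) ^ 2 ≤ ((2:ℝ) ^ (i+1)) ^ 2 :=
        pow_le_pow_left₀ (by linarith) hqR 2
      have hjq : (j : ℝ) * (δ / q) ≤ 2 / 2 ^ i := by
        calc (j : ℝ) * (δ / q) ≤ (j : ℝ) * |θ| :=
              mul_le_mul_of_nonneg_left hθlow.le (Nat.cast_nonneg j)
          _ ≤ d := hj1
          _ ≤ 2 / 2 ^ i := hd2
      have hjval : (j : ℝ) ≤ (2 / 2 ^ i) * (q / δ) := by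
        have h := mul_le_mul_of_nonneg_right hjq (show (0:ℝ) ≤ q / δ by positivity)
        have h2 : (j:ℝ) * (δ / q) * (q / δ) = j := by field_simp
        rwa [h2] at h
      calc (j : ℝ) * q ≤ (2 / 2 ^ i) * (q / δ) * q :=
            mul_le_mul_of_nonneg_right hjval (by linarith)
        _ = (2 / 2 ^ i) * (q ^ 2 / δ) := by ring
        _ ≤ (2 / 2 ^ i) * (((2:ℝ) ^ (i+1)) ^ 2 / δ) := by
            apply mul_le_mul_of_nonneg_left _ (by positivity)
            exact (div_le_div_iff_of_pos_right hδ).mpr hq2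
        _ = (8 / δ) * 2 ^ i := by field_simp; ring
    have hqt : ((q.toNat : ℕ) : ℝ) = (q : ℝ) := by
      exact_mod_cast congrArg Int.cast (Int.toNat_of_nonneg hq0.le)
    refine ⟨n₀ + j * q.toNat, P₀ + j * p, ?_, ?_⟩
    · push_cast
      rw [hqt]
      calc (n₀ : ℝ) + (j : ℝ) * q ≤ (8/δ) * 2 ^ i + (8/δ) * 2 ^ i := by
            linarith
        _ = (8/δ) * 2 ^ (i+1) := by ring
    · have hexp : ((n₀ + j * q.toNat : ℕ) : ℝ) * α - ((P₀ + j * p : ℤ) : ℝ) - β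
          = σ * ((j : ℝ) * |θ| - d) := by
        push_cast
        rw [hqt]
        linear_combination (j : ℝ) * hθeq + hσd
      rw [hexp, abs_mul, hσabs, one_mul, abs_of_nonpos (by linarith)]
      have h5 : -((j:ℝ) * |θ| - d) = d - j * |θ| := by ring
      rw [h5]
      have : (1:ℝ) / 2 ^ (i+1) ≤ 1 / 2 ^ (i+1) := le_rfl
      linarith [hj2, hθup]

/-- If `α` is badly approximable, then the linear flow
`φ_t(x,y) = (x + tα, y + t)` on the flat torus is superdense. -/
theorem stmt_3 (α : ℝ) (hirr : Irrational α)
    (hbad : ∃ δ > (0 : ℝ), ∀ p q : ℤ, 1 ≤ q → |α - (p : ℝ) / q| > δ / (q : ℝ) ^ 2) :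
    ∃ c > (0 : ℝ), ∀ x y : ℝ, ∀ T > (0 : ℝ), ∀ z : ℝ × ℝ,
      ∃ t ∈ Set.Icc (0 : ℝ) (c * T), torusDist z (x + t * α, y + t) ≤ 1 / T := by
  obtain ⟨δ, hδ, hbad⟩ := hbad
  refine ⟨2 + 16 / δ, by positivity, ?_⟩
  intro x y T hT z
  by_cases hT2 : T < 1 / 2
  · refine ⟨0, ⟨le_refl 0, by positivity⟩, ?_⟩
    have h1 := abs_sub_round (z.1 - (x + 0 * α))
    have h2 := abs_sub_round (z.2 - (y + 0))
    calc torusDist z (x + 0 * α, y + 0)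
        ≤ Real.sqrt ((z.1 - (x + 0 * α) - ((round (z.1 - (x + 0*α)) : ℤ) : ℝ)) ^ 2
            + (z.2 - (y + 0) - ((round (z.2 - (y+0)) : ℤ) : ℝ)) ^ 2) :=
          torusDist_le z _ (round (z.1 - (x + 0*α)), round (z.2 - (y+0)))
      _ ≤ 1 := by
          apply Real.sqrt_le_one.mpr
          nlinarith [abs_le.mp h1, abs_le.mp h2]
      _ ≤ 1 / T := by
          rw [le_div_iff₀ hT]
          linarith
  · push_neg at hT2
    set m : ℕ := ⌊2 * T⌋₊ with hmdef
    have hm1 : 1 ≤ m := Nat.le_floor (by push_cast; linarith)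
    set i : ℕ := Nat.log 2 m with hidef
    have h2i : (2 : ℝ) ^ i ≤ 2 * T := by
      calc ((2:ℝ) ^ i) = ((2 ^ i : ℕ) : ℝ) := by push_cast; ring
        _ ≤ (m : ℝ) := by exact_mod_cast Nat.pow_log_le_self 2 (by omega)
        _ ≤ 2 * T := Nat.floor_le (by linarith)
    have hTi : T ≤ (2 : ℝ) ^ i := by
      have hlt : m < 2 ^ (i + 1) := Nat.lt_pow_succ_log_self (by norm_num) m
      have h1 : (2 : ℝ) * T < (m : ℝ) + 1 := Nat.lt_floor_add_one (2 * T)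
      have h2 : ((m : ℝ) + 1) ≤ (2:ℝ) ^ (i+1) := by exact_mod_cast Nat.succ_le_of_lt hlt
      have h3 : (2:ℝ) * T < 2 ^ (i+1) := by linarith
      have h4 : (2:ℝ) ^ (i+1) = 2 * 2 ^ i := by ring
      linarith [h4 ▸ h3]
    set s : ℝ := Int.fract (z.2 - y) with hsdef
    obtain ⟨n, P, hn, herr⟩ := key_lemma α δ hδ hbad i (z.1 - x - s * α)
    have hs0 : 0 ≤ s := Int.fract_nonneg _
    refine ⟨s + n, ⟨by positivity, ?_⟩, ?_⟩
    · have hs1 : s ≤ 1 := (Int.fract_lt_one _).le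
      have h8 : (8/δ) * (2:ℝ) ^ i ≤ (8/δ) * (2 * T) :=
        mul_le_mul_of_nonneg_left h2i (by positivity)
      calc s + (n : ℝ) ≤ 1 + (8/δ) * 2 ^ i := by linarith
        _ ≤ 2 * T + (8/δ) * (2 * T) := by linarith
        _ = (2 + 16/δ) * T := by ring
    · have hc2 : z.2 - (y + (s + n)) - ((⌊z.2 - y⌋ - (n : ℤ) : ℤ) : ℝ) = 0 := by
        push_cast
        rw [hsdef, Int.fract]
        ring
      have hc1 : z.1 - (x + (s + n) * α) - ((-P : ℤ) : ℝ)
          = -(((n:ℝ)) * α - P - (z.1 - x - s * α)) := by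
        push_cast
        ring
      calc torusDist z (x + (s + n) * α, y + (s + n))
          ≤ Real.sqrt ((z.1 - (x + (s + n) * α) - ((-P : ℤ):ℝ)) ^ 2
              + (z.2 - (y + (s + n)) - ((⌊z.2 - y⌋ - (n:ℤ) : ℤ):ℝ)) ^ 2) :=
            torusDist_le z _ (-P, ⌊z.2 - y⌋ - (n:ℤ))
        _ = |(n : ℝ) * α - P - (z.1 - x - s * α)| := by
            rw [hc1, hc2]
            rw [show (0:ℝ)^2 = 0 by ring, add_zero, neg_pow,
              show ((-1:ℝ))^2 = 1 by norm_num, one_mul, Real.sqrt_sq_eq_abs]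
        _ ≤ 1 / 2 ^ i := herr
        _ ≤ 1 / T := one_div_le_one_div_of_le hT hTi
end

section
/- Let α be irrational and φ_t(x, y) = (x + t·α, y + t) mod 1 the linear flow on the flat torus ℝ²/ℤ². If α is not badly approximable (i.e., inf_{q≥1} q·‖qα‖ = 0), then the flow φ is not superdense: for every c > 0 there exist a starting point and a T > 0 such that the orbit segment of time length cT is not 1/T-dense. -/
/-- Distance from a real number to the nearest integer. -/
noncomputable def nint (y : ℝ) : ℝ := |y - round y|

/-!
If `q ‖qα‖` is tiny, then up to time `T ≍ q` the flow looks like a rational flow of denominator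
`q`: at a time `t` near the integer `n = a q + b` the first coordinate is
`tα ≈ bα + a (qα)`, and the drift `a ‖qα‖ ≤ (cT + 1) ‖qα‖ / q` stays well below `1/q`.
The `q` points `bα` leave a gap of length `1/(2q)` on the circle, so a point at the starting height in
the middle of that gap stays `1/T`-far from the orbit: near integer times through the first
coordinate, at all other times through the second.
-/

lemma nint_nonneg (y : ℝ) : 0 ≤ nint y := abs_nonneg _

lemma nint_eq_norm (y : ℝ) : nint y = ‖(y : UnitAddCircle)‖ := UnitAddCircle.norm_eq.symm

lemma nint_sub_eq_dist (x y : ℝ) : nint (x - y) = dist (x : UnitAddCircle) y := by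
  rw [dist_eq_norm, ← AddCircle.coe_sub, nint_eq_norm]

lemma nint_neg (y : ℝ) : nint (-y) = nint y := by
  rw [nint_eq_norm, nint_eq_norm, AddCircle.coe_neg, norm_neg]

lemma nint_add_le (x y : ℝ) : nint (x + y) ≤ nint x + nint y := by
  simpa only [nint_eq_norm, AddCircle.coe_add] using norm_add_le _ _

lemma nint_sub_le (x y z : ℝ) : nint (x - z) ≤ nint (x - y) + nint (y - z) := by
  simpa only [nint_sub_eq_dist] using dist_triangle _ _ _

lemma nint_le_abs (y : ℝ) : nint y ≤ |y| := by simpa [nint] using round_le y 0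

lemma nint_natCast_mul_le (n : ℕ) (y : ℝ) : nint (n * y) ≤ n * nint y := by
  simpa only [nint_eq_norm, ← nsmul_eq_mul, AddCircle.coe_nsmul] using norm_nsmul_le

lemma nint_le_torusDist (p q : ℝ × ℝ) :
    nint (p.1 - q.1) ≤ torusDist p q ∧ nint (p.2 - q.2) ≤ torusDist p q := by
  constructor
  · refine le_ciInf fun m => (round_le _ m.1).trans ?_
    rw [← Real.sqrt_sq_eq_abs]
    gcongr
    exact le_add_of_nonneg_right (sq_nonneg _)
  · refine le_ciInf fun m => (round_le _ m.2).trans ?_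
    rw [← Real.sqrt_sq_eq_abs]
    gcongr
    exact le_add_of_nonneg_left (sq_nonneg _)

lemma one_div_le_nint_intCast_div (N : ℕ) {j : ℤ} (hj : ¬ (N : ℤ) ∣ j) :
    1 / (N : ℝ) ≤ nint (j / N) := by
  rcases N.eq_zero_or_pos with rfl | hN
  · simpa using nint_nonneg _
  set r := round ((j : ℝ) / N)
  have hne : j - N * r ≠ 0 := fun h => hj ⟨r, by linarith⟩
  have hone : (1 : ℝ) ≤ |((j - N * r : ℤ) : ℝ)| := by exact_mod_cast Int.one_le_abs hne
  calc 1 / (N : ℝ) ≤ |((j - N * r : ℤ) : ℝ)| / N := by gcongr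
    _ = nint (j / N) := by
      rw [nint, show (j : ℝ) / N - r = ((j - N * r : ℤ) : ℝ) / N by push_cast; field_simp,
        abs_div, Nat.abs_cast]

/-- Pigeonhole: of the `2n` points `(2k+1)/(4n)`, pairwise `1/(2n)` apart on the circle, one is
at distance at least `1/(4n)` from each of `n` given points. -/
lemma exists_nint_sub_ge (n : ℕ) (f : ℕ → ℝ) :
    ∃ z : ℝ, ∀ b < n, 1 / (4 * n) ≤ nint (z - f b) := by
  rcases n.eq_zero_or_pos with rfl | hn
  · exact ⟨0, by simp⟩
  by_contra! hcon
  choose g hg hclose using hcon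
  set s : ℕ → ℝ := fun k => (2 * k + 1) / (4 * n)
  have hmaps : ∀ k ∈ Finset.range (2 * n), g (s k) ∈ Finset.range n :=
    fun k _ => Finset.mem_range.mpr (hg _)
  obtain ⟨k, hk, k', hk', hne, hkk'⟩ := Finset.exists_ne_map_eq_of_card_lt_of_maps_to
    (by simp only [Finset.card_range]; omega) hmaps
  simp only [Finset.mem_range] at hk hk'
  have hsep : 1 / ((2 * n : ℕ) : ℝ) ≤ nint (s k - s k') := by
    convert one_div_le_nint_intCast_div (2 * n) (j := k - k') ?_ using 2
    · simp only [s]; push_cast; field_simp; ring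
    · exact fun h => hne <| by
        have := Int.eq_zero_of_abs_lt_dvd h (abs_lt.mpr ⟨by omega, by omega⟩)
        omega
  have htri := nint_sub_le (s k) (f (g (s k))) (s k')
  rw [show f (g (s k)) - s k' = -(s k' - f (g (s k'))) by rw [hkk']; ring, nint_neg] at htri
  have h1 := hclose (s k)
  have h2 := hclose (s k')
  push_cast at hsep
  have : 1 / (2 * (n : ℝ)) = 1 / (4 * n) + 1 / (4 * n) := by ring
  linarith

lemma exists_lt_nint_mul_sub_le (α : ℝ) {t : ℝ} (ht : 0 ≤ t) {q : ℕ} (hq : 0 < q) :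
    ∃ b < q, nint (t * α - b * α) ≤ nint t * |α| + (t + 1 / 2) * nint (q * α) / q := by
  have hround : 0 ≤ round t := by
    have : (-1 : ℝ) < round t := by linarith [sub_half_lt_round t]
    exact_mod_cast this
  set n := (round t).toNat
  have hn : (n : ℝ) = round t := by exact_mod_cast Int.toNat_of_nonneg hround
  refine ⟨n % q, Nat.mod_lt _ hq, ?_⟩
  have hdecomp : t * α - (n % q : ℕ) * α = (t - n) * α + (n / q : ℕ) * (q * α) := by
    have : ((n % q : ℕ) : ℝ) = n - q * (n / q : ℕ) := by
      rw [eq_sub_iff_add_eq, add_comm]; exact_mod_cast Nat.div_add_mod n q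
    rw [this]; ring
  have hquot : ((n / q : ℕ) : ℝ) ≤ (t + 1 / 2) / q :=
    Nat.cast_div_le.trans (by gcongr; rw [hn]; exact round_le_add_half t)
  calc nint (t * α - (n % q : ℕ) * α)
      ≤ nint ((t - n) * α) + nint ((n / q : ℕ) * (q * α)) := hdecomp ▸ nint_add_le _ _
    _ ≤ |(t - n) * α| + (n / q : ℕ) * nint (q * α) :=
      add_le_add (nint_le_abs _) (nint_natCast_mul_le _ _)
    _ ≤ nint t * |α| + (t + 1 / 2) / q * nint (q * α) := by
      rw [abs_mul, hn]
      gcongr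
      · rfl
      · exact nint_nonneg _
    _ = nint t * |α| + (t + 1 / 2) * nint (q * α) / q := by ring

lemma exists_far_from_orbit (α x y c T : ℝ) {q : ℕ} (hq : 0 < q)
    (h : (1 + |α|) / T + (c * T + 1) * nint (q * α) / q < 1 / (4 * q)) :
    ∃ z : ℝ × ℝ, ∀ t ∈ Set.Icc 0 (c * T), 1 / T < torusDist z (x + t * α, y + t) := by
  obtain ⟨z₁, hz₁⟩ := exists_nint_sub_ge q (fun b => b * α)
  refine ⟨(x + z₁, y), fun t ⟨ht0, htc⟩ => ?_⟩
  obtain ⟨hfst, hsnd⟩ := nint_le_torusDist (x + z₁, y) (x + t * α, y + t)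
  rw [show x + z₁ - (x + t * α) = z₁ - t * α by ring] at hfst
  rw [show y - (y + t) = -t by ring, nint_neg] at hsnd
  rcases lt_or_ge (1 / T) (nint t) with hfar | hnear
  · exact hfar.trans_le hsnd
  -- `t` is within `1/T` of an integer `n`, so `t α` is close to `b α` with `b = n mod q`
  obtain ⟨b, hb, happrox⟩ := exists_lt_nint_mul_sub_le α ht0 hq
  have hgap := hz₁ b hb
  have htri := nint_sub_le z₁ (t * α) (b * α)
  have hfrac : nint t * |α| ≤ |α| / T :=
    calc nint t * |α| ≤ 1 / T * |α| := by gcongr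
      _ = |α| / T := by ring
  have hquot : (t + 1 / 2) * nint (q * α) / q ≤ (c * T + 1) * nint (q * α) / q := by
    gcongr
    · exact nint_nonneg _
    · linarith
  have : (1 + |α|) / T = 1 / T + |α| / T := by ring
  linarith

theorem stmt_4_general (α : ℝ)
    (hnotbad : ∀ ε > (0 : ℝ), ∃ q : ℕ, 1 ≤ q ∧ (q : ℝ) * nint ((q : ℝ) * α) < ε) :
    ∀ c > (0 : ℝ), ∃ x y : ℝ, ∃ T > (0 : ℝ), ∃ z : ℝ × ℝ,
      ∀ t ∈ Set.Icc (0 : ℝ) (c * T), 1 / T < torusDist z (x + t * α, y + t) := by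
  intro c hc
  set C := 8 * c * (1 + |α|) + 1
  have hC : 0 < C := by positivity
  obtain ⟨q, hq, hqδ⟩ := hnotbad (1 / (8 * C)) (by positivity)
  set δ := nint (q * α)
  have hq' : (1 : ℝ) ≤ q := by exact_mod_cast hq
  set T := 8 * (1 + |α|) * q
  have hT : 0 < T := by positivity
  refine ⟨0, 0, T, hT, exists_far_from_orbit α 0 0 c T hq ?_⟩
  -- the first term is `1/(8q)`, the second `< 1/(8q)` because `q ‖qα‖ < 1/(8C)`
  have hsmall : (c * T + 1) * δ < 1 / 8 :=
    calc (c * T + 1) * δ ≤ C * (q * δ) := by nlinarith [nint_nonneg (q * α), abs_nonneg α]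
      _ < C * (1 / (8 * C)) := by gcongr
      _ = 1 / 8 := by field_simp
  calc (1 + |α|) / T + (c * T + 1) * δ / q < 1 / (8 * q) + 1 / 8 / q := by
        refine add_lt_add_of_le_of_lt (le_of_eq ?_) (by gcongr)
        simp only [T]
        field_simp
    _ = 1 / (4 * q) := by field_simp; norm_num

/-- If `α` is irrational but not badly approximable, the linear flow
`φ_t(x,y) = (x + tα, y + t)` on the flat torus is not superdense. -/
theorem stmt_4 (α : ℝ) (hirr : Irrational α)
    (hnotbad : ∀ ε > (0 : ℝ), ∃ q : ℕ, 1 ≤ q ∧ (q : ℝ) * nint ((q : ℝ) * α) < ε) :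
    ∀ c > (0 : ℝ), ∃ x y : ℝ, ∃ T > (0 : ℝ), ∃ z : ℝ × ℝ,
      ∀ t ∈ Set.Icc (0 : ℝ) (c * T), 1 / T < torusDist z (x + t * α, y + t) :=
  stmt_4_general α hnotbad
end

section
/- Let α be badly approximable with q·‖qα‖ ≥ δ for all integers q ≥ 1. Then for every N ≥ 1 and every x ∈ ℝ, the points {x, x + α, x + 2α, …, x + ⌈N/δ⌉·α} are (1/N)-dense modulo 1. -/
/-!
Dirichlet's theorem with denominator bound `M = ⌈N/δ⌉` gives a reduced fraction `p/d` with
`d ≤ M` and `η := |dα - p| ≤ 1/(M+1) ≤ δ/N`; badness gives `δ ≤ d η`, hence `d ≥ N`.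
As `k` runs over `0, …, d-1`, the residues `k p mod d` run over all of `ℤ/d`, so the points
`k α = k p/d + k (α - p/d)` come within `η` of every point of the grid `(1/d) ℤ`, which is
itself `1/(2d)`-dense. Altogether the `d ≤ M` points are `δ/N + 1/(2N) ≤ 1/N`-dense.
-/

lemma nint_le_abs_sub_intCast (y : ℝ) (t : ℤ) : nint y ≤ |y - t| :=
  round_le y t

lemma exists_lt_mul_modEq_of_isCoprime {p : ℤ} {d : ℕ} (hd : 0 < d) (hcop : IsCoprime p d)
    (j : ℤ) : ∃ k : ℕ, k < d ∧ (k : ℤ) * p ≡ j [ZMOD d] := by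
  obtain ⟨a, b, hab⟩ := hcop
  have hd' : (0 : ℤ) < d := by exact_mod_cast hd
  have hk0 := Int.emod_nonneg (a * j) hd'.ne'
  have hkd := Int.emod_lt_of_pos (a * j) hd'
  refine ⟨((a * j) % d).toNat, by omega, ?_⟩
  rw [Int.toNat_of_nonneg hk0]
  calc (a * j) % d * p ≡ a * j * p [ZMOD d] := (Int.mod_modEq _ _).mul_right p
    _ = j - d * (b * j) := by linear_combination j * hab
    _ ≡ j [ZMOD d] := by simp [Int.ModEq, Int.sub_emod]

lemma exists_lt_nint_mul_sub_le_s10 {α : ℝ} {p : ℤ} {d : ℕ} (hd : 0 < d) (hcop : IsCoprime p d)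
    (y : ℝ) : ∃ k : ℕ, k < d ∧ nint (k * α - y) ≤ |d * α - p| + 1 / (2 * d) := by
  obtain ⟨k, hkd, hk⟩ := exists_lt_mul_modEq_of_isCoprime hd hcop (round (d * y))
  obtain ⟨t, ht⟩ := hk.symm.dvd
  have hd' : (0 : ℝ) < d := by exact_mod_cast hd
  have hkp : (k : ℝ) * p = round (d * y) + d * t := by
    exact_mod_cast (by linarith : (k : ℤ) * p = round (d * y) + d * t)
  have hround : |(round (d * y) : ℝ) - d * y| ≤ 1 / 2 := by
    rw [abs_sub_comm]; exact abs_sub_round _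
  have hkd' : (k : ℝ) ≤ d := by exact_mod_cast hkd.le
  refine ⟨k, hkd, (nint_le_abs_sub_intCast _ t).trans ?_⟩
  rw [← mul_le_mul_iff_of_pos_left hd', ← abs_of_pos hd', ← abs_mul, abs_of_pos hd']
  calc |(d : ℝ) * (k * α - y - t)|
      = |k * (d * α - p) + ((round (d * y) : ℝ) - d * y)| := by
        congr 1; linear_combination hkp
    _ ≤ k * |d * α - p| + 1 / 2 := by
        grw [abs_add_le, abs_mul, abs_of_nonneg (Nat.cast_nonneg k), hround]
    _ ≤ d * |d * α - p| + 1 / 2 := by gcongr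
    _ = d * (|d * α - p| + 1 / (2 * d)) := by field_simp

lemma exists_isCoprime_abs_mul_sub_le (α : ℝ) {M : ℕ} (hM : 0 < M) :
    ∃ (p : ℤ) (d : ℕ), 0 < d ∧ d ≤ M ∧ IsCoprime p d ∧ |d * α - p| ≤ 1 / (M + 1) := by
  obtain ⟨q, hq, hden⟩ := Real.exists_rat_abs_sub_le_and_den_le α hM
  have hd : (0 : ℝ) < q.den := by exact_mod_cast q.pos
  refine ⟨q.num, q.den, q.pos, hden, ?_, ?_⟩
  · rw [Int.isCoprime_iff_gcd_eq_one]
    exact q.reduced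
  · have : (q.den : ℝ) * α - q.num = q.den * (α - q) := by
      rw [Rat.cast_def]; field_simp
    rw [this, abs_mul, abs_of_pos hd]
    calc (q.den : ℝ) * |α - q| ≤ q.den * (1 / ((M + 1) * q.den)) := by gcongr
      _ = 1 / (M + 1) := by field_simp

/-- If `α` is badly approximable with `q·‖qα‖ ≥ δ` for all `q ≥ 1`, then for
every `N ≥ 1` and every `x`, the points `x, x+α, …, x+⌈N/δ⌉·α` are `1/N`-dense
modulo 1. -/
theorem stmt_10 (α δ : ℝ) (hδ0 : 0 < δ) (hδ : δ < 1 / 2)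
    (hbad : ∀ q : ℕ, 1 ≤ q → δ ≤ (q : ℝ) * nint ((q : ℝ) * α)) :
    ∀ N : ℝ, 1 ≤ N → ∀ x z : ℝ,
      ∃ k : ℕ, k ≤ ⌈N / δ⌉₊ ∧ nint (x + (k : ℝ) * α - z) ≤ 1 / N := by
  intro N hN x z
  have hN0 : 0 < N := by linarith
  obtain ⟨p, d, hd, hdM, hcop, hη⟩ :=
    exists_isCoprime_abs_mul_sub_le α (Nat.ceil_pos.mpr (by positivity : 0 < N / δ))
  have hηδ : |d * α - p| ≤ δ / N :=
    calc |d * α - p| ≤ 1 / (⌈N / δ⌉₊ + 1) := hη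
      _ ≤ 1 / (N / δ) := by
          gcongr
          exact (Nat.le_ceil _).trans (le_add_of_nonneg_right zero_le_one)
      _ = δ / N := one_div_div N δ
  have hδd : δ ≤ d * |d * α - p| :=
    (hbad d hd).trans (by gcongr; exact nint_le_abs_sub_intCast _ p)
  have hNd : N ≤ d := by
    have := hδd.trans (mul_le_mul_of_nonneg_left hηδ d.cast_nonneg)
    rw [mul_div_assoc', le_div_iff₀ hN0] at this
    exact le_of_mul_le_mul_left (by linarith) hδ0
  obtain ⟨k, hkd, hk⟩ := exists_lt_nint_mul_sub_le_s10 (α := α) hd hcop (z - x)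
  refine ⟨k, hkd.le.trans hdM, ?_⟩
  calc nint (x + k * α - z) = nint (k * α - (z - x)) := by ring_nf
    _ ≤ |d * α - p| + 1 / (2 * d) := hk
    _ ≤ δ / N + 1 / (2 * N) := by gcongr
    _ = (δ + 1 / 2) / N := by ring
    _ ≤ 1 / N := by gcongr; linarith
end

section
/- Let α be irrational with inf_{q≥1} q·‖qα‖ = 0. Then for every C > 0 there exist N ≥ 1 and x ∈ ℝ such that the points {x + kα : 0 ≤ k ≤ ⌊C·N⌋} are not (1/N)-dense modulo 1. -/
/-!
Pick `q` with `q‖qα‖` tiny and write `qα = p + β` with `p` the nearest integer, so `|β| = ‖qα‖`.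
Then `1/(2q) + kα = (2kp + 1)/(2q) + kβ/q`: the first term is an odd multiple of `1/(2q)`, hence
at distance at least `1/(2q)` from ℤ, and for `k ≤ 4Cq` the drift `kβ/q` stays below `1/(4q)`.
So with `N = 4q` and `x = 1/(2q)` no point of the orbit comes within `1/N` of `0`.
-/

lemma nint_sub_abs_le_nint_add (a b : ℝ) : nint a - |b| ≤ nint (a + b) := by
  have h₁ : nint a ≤ |a - round (a + b)| := round_le a _
  have h₂ : |a - round (a + b)| ≤ |a + b - round (a + b)| + |b| := calc
    |a - round (a + b)| = |(a + b - round (a + b)) + -b| := by ring_nf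
    _ ≤ |a + b - round (a + b)| + |-b| := abs_add_le _ _
    _ = |a + b - round (a + b)| + |b| := by rw [abs_neg]
  have h₃ : nint (a + b) = |a + b - round (a + b)| := rfl
  linarith

lemma inv_le_nint_intCast_div {d : ℕ} (hd : 0 < d) {n : ℤ} (hdn : ¬ (d : ℤ) ∣ n) :
    1 / (d : ℝ) ≤ nint (n / d) := by
  have hd' : (0 : ℝ) < d := by exact_mod_cast hd
  have hne : n - d * round ((n : ℝ) / d) ≠ 0 := fun h ↦
    hdn ⟨round ((n : ℝ) / d), by linear_combination h⟩
  have hone : (1 : ℝ) ≤ |((n - d * round ((n : ℝ) / d) : ℤ) : ℝ)| := by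
    exact_mod_cast Int.one_le_abs hne
  have hdiv : (n : ℝ) / d - round ((n : ℝ) / d) = ((n - d * round ((n : ℝ) / d) : ℤ) : ℝ) / d := by
    push_cast
    field_simp
  rw [nint, hdiv, abs_div, abs_of_pos hd']
  gcongr

lemma inv_two_mul_le_nint_odd_div {q : ℕ} (hq : 0 < q) {n : ℤ} (hn : Odd n) :
    1 / (2 * q : ℝ) ≤ nint (n / (2 * q)) := by
  have hdn : ¬ ((2 * q : ℕ) : ℤ) ∣ n := fun h ↦
    Int.not_even_iff_odd.mpr hn (even_iff_two_dvd.mpr (dvd_trans ⟨q, by push_cast; ring⟩ h))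
  simpa using inv_le_nint_intCast_div (by omega) hdn

lemma inv_two_mul_sub_le_nint_add_nat_mul (α : ℝ) {q : ℕ} (hq : 0 < q) (k : ℕ) :
    1 / (2 * q : ℝ) - k * nint (q * α) / q ≤ nint (1 / (2 * q) + k * α) := by
  have hq' : (0 : ℝ) < q := by exact_mod_cast hq
  set p := round ((q : ℝ) * α)
  have hsplit : 1 / (2 * q : ℝ) + k * α
      = ((2 * (k * p) + 1 : ℤ) : ℝ) / (2 * q) + k * (q * α - p) / q := by
    push_cast
    field_simp
    ring
  have hdrift : |k * ((q : ℝ) * α - p) / q| = k * nint (q * α) / q := by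
    rw [nint, abs_div, abs_mul, abs_of_pos hq', Nat.abs_cast]
  have hfar := inv_two_mul_le_nint_odd_div hq (odd_two_mul_add_one (k * p))
  have hperturb := nint_sub_abs_le_nint_add (((2 * (k * p) + 1 : ℤ) : ℝ) / (2 * q)) (k * (q * α - p) / q)
  rw [hsplit]
  linarith

theorem stmt_11_general (α : ℝ)
    (hnotbad : ∀ ε > (0 : ℝ), ∃ q : ℕ, 1 ≤ q ∧ (q : ℝ) * nint ((q : ℝ) * α) < ε) :
    ∀ C > (0 : ℝ), ∃ N : ℕ, 1 ≤ N ∧ ∃ x z : ℝ,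
      ∀ k : ℕ, k ≤ ⌊C * (N : ℝ)⌋₊ → 1 / (N : ℝ) < nint (x + (k : ℝ) * α - z) := by
  intro C hC
  obtain ⟨q, hq, hsmall⟩ := hnotbad (1 / (16 * C)) (by positivity)
  have hq' : (0 : ℝ) < q := by exact_mod_cast hq
  refine ⟨4 * q, by omega, 1 / (2 * q), 0, fun k hk ↦ ?_⟩
  have hkC : (k : ℝ) ≤ C * (4 * q) := by
    exact_mod_cast (Nat.le_floor_iff (by positivity)).mp hk
  have hsmall' : q * nint (q * α) * (16 * C) < 1 := (lt_div_iff₀ (by positivity)).mp hsmall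
  have hdrift : k * nint (q * α) / q < 1 / (4 * q) := calc
    k * nint (q * α) / q ≤ C * (4 * q) * nint (q * α) / q := by
      gcongr; exact abs_nonneg _
    _ = 4 * C * nint (q * α) := by field_simp
    _ < 1 / (4 * q) := by rw [lt_div_iff₀ (by positivity)]; linarith
  have hshift := inv_two_mul_sub_le_nint_add_nat_mul α (by omega : 0 < q) k
  have hhalf : 1 / (2 * q : ℝ) = 1 / (4 * q) + 1 / (4 * q) := by field_simp; norm_num
  rw [sub_zero]
  push_cast
  linarith

/-- If `α` is irrational with `inf_{q≥1} q·‖qα‖ = 0`, then for every `C > 0`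
there exist `N ≥ 1` and `x` such that the points `x + kα`, `0 ≤ k ≤ ⌊C·N⌋`,
are not `1/N`-dense modulo 1. -/
theorem stmt_11 (α : ℝ) (hirr : Irrational α)
    (hnotbad : ∀ ε > (0 : ℝ), ∃ q : ℕ, 1 ≤ q ∧ (q : ℝ) * nint ((q : ℝ) * α) < ε) :
    ∀ C > (0 : ℝ), ∃ N : ℕ, 1 ≤ N ∧ ∃ x z : ℝ,
      ∀ k : ℕ, k ≤ ⌊C * (N : ℝ)⌋₊ → 1 / (N : ℝ) < nint (x + (k : ℝ) * α - z) :=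
  stmt_11_general α hnotbad
end
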